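/- arXiv:2112.14886 — 3 statements merged into one kernel-verified Lean document; each statement's English description precedes it below -/
import Mathlib

section
/- Let λ ≠ 0 be a real number, let n be a positive integer, let (X_j)_{1≤j≤n} be independent Bernoulli random variables with P{X_j = 1} = 1/j, and set Y_n = X_1 + ⋯ + X_n. Then for every real number x, the degenerate falling factorial satisfies (x)_{n+1,λ} = x(x - λ)(x - 2λ)⋯(x - nλ) = n! (-1)^n λ^n x E[(1 - x/λ)^{Y_n}]. -/
open MeasureTheory ProbabilityTheory Finset

/-!
Writing `t = 1 - x/λ`, each factor `x - jλ` with `1 ≤ j ≤ n` equals `-jλ (1 + (t - 1)/j)`,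
and `1 + (t - 1)/j` is the expectation of `t ^ X_j` for a Bernoulli variable `X_j` of
parameter `1/j`. By independence the product of these expectations is the expectation of
`t ^ Y_n`.
-/

/-- The degenerate falling factorial `(x)_{m,λ} = x(x-λ)⋯(x-(m-1)λ)`, with `(x)_{0,λ} = 1`. -/
def degFallingFactorial (l x : ℝ) : ℕ → ℝ
  | 0 => 1
  | m + 1 => degFallingFactorial l x m * (x - m * l)

theorem degFallingFactorial_eq_prod_range (l x : ℝ) (m : ℕ) :
    degFallingFactorial l x m = ∏ k ∈ range m, (x - k * l) := by
  induction m with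
  | zero => rfl
  | succ m ih => rw [degFallingFactorial, ih, prod_range_succ]

theorem degFallingFactorial_succ_eq_mul_prod {l : ℝ} (hl : l ≠ 0) (x : ℝ) (n : ℕ) :
    degFallingFactorial l x (n + 1)
      = n.factorial * (-1) ^ n * l ^ n * x
          * ∏ k ∈ range n, (1 + (1 - x / l - 1) * (1 / (k + 1 : ℕ))) := by
  have factor_eq (k : ℕ) : x - (k + 1 : ℕ) * l
      = ((k + 1 : ℕ) * (-1) * l) * (1 + (1 - x / l - 1) * (1 / (k + 1 : ℕ))) := by
    field_simp
    ring
  rw [degFallingFactorial_eq_prod_range, prod_range_succ', prod_congr rfl fun k _ => factor_eq k,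
    prod_mul_distrib, prod_mul_distrib, prod_mul_distrib, ← Nat.cast_prod,
    prod_range_add_one_eq_factorial]
  simp only [prod_const, card_range, Nat.cast_zero, zero_mul, sub_zero]
  ring

section Probability

variable {Ω : Type*} [MeasurableSpace Ω] {μ : Measure Ω}

theorem ProbabilityTheory.iIndepFun.integral_pow_sum {ι : Type*} [Fintype ι]
    {X : ι → Ω → ℕ} (hX : iIndepFun X μ) (mX : ∀ i, Measurable (X i)) (t : ℝ) :
    ∫ ω, t ^ (∑ i, X i ω) ∂μ = ∏ i, ∫ ω, t ^ X i ω ∂μ := by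
  simp_rw [← prod_pow_eq_pow_sum]
  exact hX.integral_fun_prod_comp (fun i => (mX i).aemeasurable)
    (fun _ => (measurable_from_top (f := fun m : ℕ => t ^ m)).aestronglyMeasurable)

theorem integral_pow_of_zero_or_one [IsProbabilityMeasure μ] {X : Ω → ℕ} (hX : Measurable X)
    (hval : ∀ ω, X ω = 0 ∨ X ω = 1) (t : ℝ) :
    ∫ ω, t ^ X ω ∂μ = 1 + (t - 1) * μ.real {ω | X ω = 1} := by
  set A := {ω | X ω = 1}
  have hA : MeasurableSet A := hX (measurableSet_singleton 1)
  have pow_eq : (fun ω => t ^ X ω) = fun ω => 1 + A.indicator (fun _ => t - 1) ω := by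
    funext ω
    rcases hval ω with h | h <;> simp [A, h]
  rw [pow_eq, integral_add (integrable_const 1) ((integrable_const _).indicator hA),
    integral_indicator_const _ hA]
  simp [mul_comm]

end Probability

theorem degFallingFactorial_eq_expectation_general
    {Ω : Type*} [MeasurableSpace Ω] (μ : Measure Ω) [IsProbabilityMeasure μ]
    (l : ℝ) (hl : l ≠ 0)
    (n : ℕ) (X : ℕ → Ω → ℕ)
    (hmeas : ∀ j, Measurable (X j))
    (hindep : iIndepFun (fun i : Fin n => X (i.1 + 1)) μ)
    (hval : ∀ j ∈ Finset.Icc 1 n, ∀ ω, X j ω = 0 ∨ X j ω = 1)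
    (hp1 : ∀ j ∈ Finset.Icc 1 n, μ {ω | X j ω = 1} = ENNReal.ofReal (1 / (j : ℝ))) :
    ∀ x : ℝ,
      degFallingFactorial l x (n + 1) = ∏ k ∈ Finset.range (n + 1), (x - k * l) ∧
      degFallingFactorial l x (n + 1)
        = (Nat.factorial n : ℝ) * (-1) ^ n * l ^ n * x
            * ∫ ω, (1 - x / l) ^ (∑ j ∈ Finset.Icc 1 n, X j ω) ∂μ := by
  intro x
  refine ⟨degFallingFactorial_eq_prod_range l x (n + 1), ?_⟩
  have sum_eq (ω : Ω) : ∑ j ∈ Icc 1 n, X j ω = ∑ i : Fin n, X (i + 1) ω := by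
    rw [Fin.sum_univ_eq_sum_range (fun i => X (i + 1) ω), ← Ico_add_one_right_eq_Icc,
      sum_Ico_eq_sum_range]
    simp only [add_comm 1, add_tsub_cancel_right]
  have integral_factor (i : Fin n) :
      ∫ ω, (1 - x / l) ^ X (i + 1) ω ∂μ = 1 + (1 - x / l - 1) * (1 / (i + 1 : ℕ)) := by
    have hi : i.1 + 1 ∈ Icc 1 n := mem_Icc.2 ⟨le_add_self, i.2⟩
    rw [integral_pow_of_zero_or_one (hmeas _) (hval _ hi), measureReal_def, hp1 _ hi,
      ENNReal.toReal_ofReal (by positivity)]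
  simp_rw [sum_eq, hindep.integral_pow_sum (fun i => hmeas _), integral_factor,
    Fin.prod_univ_eq_prod_range (fun k => 1 + (1 - x / l - 1) * (1 / (k + 1 : ℕ) : ℝ))]
  exact degFallingFactorial_succ_eq_mul_prod hl x n

/-- For `λ ≠ 0` and `Y = X 1 + ⋯ + X n` a sum of independent Bernoulli random
variables with success probabilities `1/j`, for every real `x`,
`(x)_{n+1,λ} = x(x-λ)(x-2λ)⋯(x-nλ) = n! (-1)^n λ^n x E[(1 - x/λ)^Y]`. -/
theorem degFallingFactorial_eq_expectation
    {Ω : Type*} [MeasurableSpace Ω] (μ : Measure Ω) [IsProbabilityMeasure μ]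
    (l : ℝ) (hl : l ≠ 0)
    (n : ℕ) (hn : 0 < n) (X : ℕ → Ω → ℕ)
    (hmeas : ∀ j, Measurable (X j))
    (hindep : iIndepFun (fun i : Fin n => X (i.1 + 1)) μ)
    (hval : ∀ j ∈ Finset.Icc 1 n, ∀ ω, X j ω = 0 ∨ X j ω = 1)
    (hp1 : ∀ j ∈ Finset.Icc 1 n, μ {ω | X j ω = 1} = ENNReal.ofReal (1 / (j : ℝ)))
    (hp0 : ∀ j ∈ Finset.Icc 1 n, μ {ω | X j ω = 0} = ENNReal.ofReal (1 - 1 / (j : ℝ))) :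
    ∀ x : ℝ,
      degFallingFactorial l x (n + 1) = ∏ k ∈ Finset.range (n + 1), (x - k * l) ∧
      degFallingFactorial l x (n + 1)
        = (Nat.factorial n : ℝ) * (-1) ^ n * l ^ n * x
            * ∫ ω, (1 - x / l) ^ (∑ j ∈ Finset.Icc 1 n, X j ω) ∂μ :=
  degFallingFactorial_eq_expectation_general μ l hl n X hmeas hindep hval hp1
end

section
/- Let λ ≠ 0 be a real number, let n be a positive integer, let (X_j)_{1≤j≤n} be independent Bernoulli random variables with P{X_j = 1} = 1/j, and set Y_n = X_1 + ⋯ + X_n. Let S_1 : ℕ × ℕ → ℝ satisfy the defining identity of the Stirling numbers of the first kind, namely x(x-1)⋯(x-m+1) = Σ_{l=0}^{m} S_1(m,l) x^l for all real x and all m ≥ 0, and let S_{2,λ} : ℕ × ℕ → ℝ satisfy the defining identity of the degenerate Stirling numbers of the second kind, namely x(x-λ)⋯(x-(m-1)λ) = Σ_{l=0}^{m} S_{2,λ}(m,l) · x(x-1)⋯(x-l+1) for all real x and all m ≥ 0. Then for every integer l with 0 ≤ l ≤ n, Σ_{m=l}^{n} S_{2,λ}(n+1, m+1) S_1(m+1,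 l+1) = (-1)^{n-l} λ^{n-l} n! E[binom(Y_n, l)]. -/
/-!
The degenerate falling factorial `(x)_{n+1,λ}` is the falling factorial `(x)_{n+1}` with its
roots scaled by `λ`, so comparing coefficients of `x^(k+1)` in
`(x)_{n+1,λ} = ∑ₘ S_{2,λ}(n+1,m) (x)_m` turns the left-hand side into `λ^(n-k) S₁(n+1,k+1)`.
By Vieta, since `(x)_{n+1} = x ∏_{j=1}^n (x - j)`, this is `(-λ)^(n-k) e_{n-k}(1,…,n)`, and
passing to complements gives `e_{n-k}(1,…,n) = n! e_k(1,1/2,…,1/n)`. On the probabilistic side,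
`C(Y_n, k)` counts the `k`-sets of indices whose indicators all equal `1`, so independence gives
`E[C(Y_n, k)] = e_k(1,1/2,…,1/n)`.
-/

open MeasureTheory ProbabilityTheory Finset Polynomial

theorem Nat.choose_sum_eq_sum_powersetCard_prod {ι : Type*} (s : Finset ι) (x : ι → ℕ)
    (hx : ∀ i ∈ s, x i ≤ 1) (k : ℕ) :
    (∑ i ∈ s, x i).choose k = ∑ t ∈ s.powersetCard k, ∏ i ∈ t, x i := by
  classical
  set A := s.filter (fun i => x i = 1)
  have hsum : ∑ i ∈ s, x i = #A := by
    rw [card_filter]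
    exact sum_congr rfl fun i hi => by have := hx i hi; split_ifs <;> omega
  have hvanish : ∀ t ∈ s.powersetCard k, t ∉ A.powersetCard k → ∏ i ∈ t, x i = 0 := by
    intro t ht htA
    obtain ⟨hts, htk⟩ := mem_powersetCard.1 ht
    obtain ⟨i, hit, hiA⟩ := not_subset.1 fun h => htA (mem_powersetCard.2 ⟨h, htk⟩)
    have : x i ≠ 1 := fun h => hiA (mem_filter.2 ⟨hts hit, h⟩)
    exact prod_eq_zero hit (by have := hx i (hts hit); omega)
  rw [hsum, ← card_powersetCard, card_eq_sum_ones,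
    ← sum_subset (powersetCard_mono (filter_subset _ s)) hvanish]
  refine sum_congr rfl fun t ht => (prod_eq_one fun i hi => ?_).symm
  exact (mem_filter.1 ((mem_powersetCard.1 ht).1 hi)).2

theorem Finset.prod_mul_sum_powersetCard_prod_inv {ι K : Type*} [Field K] [DecidableEq ι]
    (s : Finset ι) (f : ι → K) (hf : ∀ i ∈ s, f i ≠ 0) {k : ℕ} (hk : k ≤ #s) :
    (∏ i ∈ s, f i) * ∑ t ∈ s.powersetCard k, ∏ i ∈ t, (f i)⁻¹
      = ∑ t ∈ s.powersetCard (#s - k), ∏ i ∈ t, f i := by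
  rw [mul_sum]
  refine sum_nbij' (s \ ·) (s \ ·) ?_ ?_ ?_ ?_ ?_
  · intro t ht
    obtain ⟨hts, htk⟩ := mem_powersetCard.1 ht
    exact mem_powersetCard.2 ⟨sdiff_subset, by rw [card_sdiff_of_subset hts, htk]⟩
  · intro t ht
    obtain ⟨hts, htk⟩ := mem_powersetCard.1 ht
    exact mem_powersetCard.2 ⟨sdiff_subset, by rw [card_sdiff_of_subset hts, htk]; omega⟩
  · exact fun t ht => sdiff_sdiff_eq_self (mem_powersetCard.1 ht).1
  · exact fun t ht => sdiff_sdiff_eq_self (mem_powersetCard.1 ht).1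
  · intro t ht
    have hts := (mem_powersetCard.1 ht).1
    have hft : ∏ i ∈ t, f i ≠ 0 := prod_ne_zero_iff.2 fun i hi => hf i (hts hi)
    rw [← prod_sdiff hts, prod_inv_distrib, mul_assoc, mul_inv_cancel₀ hft, mul_one]

theorem Polynomial.coeff_eq_of_forall_eval_eq_sum {R : Type*} [CommRing R] [IsDomain R]
    [Infinite R] {p : R[X]} {N : ℕ} {a : ℕ → R} (h : ∀ x, p.eval x = ∑ i ∈ range N, a i * x ^ i)
    {i : ℕ} (hi : i < N) : p.coeff i = a i := by
  have hp : p = ∑ j ∈ range N, C (a j) * X ^ j :=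
    Polynomial.funext fun x => by simp [h, eval_finsetSum]
  simp [hp, hi]

theorem descPochhammer_scaleRoots {R : Type*} [CommRing R] [NoZeroDivisors R] (m : ℕ) (s : R) :
    (descPochhammer R m).scaleRoots s = ∏ j ∈ range m, (X - C (j * s)) := by
  induction m with
  | zero => simp
  | succ m ih =>
    rw [descPochhammer_succ_right, mul_scaleRoots_of_noZeroDivisors, ih, prod_range_succ,
      ← C_eq_natCast, X_sub_C_scaleRoots]

theorem sum_stirling2_mul_stirling1_eq_pow_mul_coeff_descPochhammer (a : ℝ) (S₁ : ℕ → ℕ → ℝ)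
    (hS₁ : ∀ (m : ℕ) (x : ℝ),
      ∏ k ∈ range m, (x - k) = ∑ i ∈ range (m + 1), S₁ m i * x ^ i)
    (S₂ : ℕ → ℕ → ℝ)
    (hS₂ : ∀ (m : ℕ) (x : ℝ),
      ∏ k ∈ range m, (x - k * a) = ∑ i ∈ range (m + 1), S₂ m i * ∏ k ∈ range i, (x - k))
    (n k : ℕ) :
    ∑ m ∈ Icc k n, S₂ (n + 1) (m + 1) * S₁ (m + 1) (k + 1)
      = a ^ (n - k) * (descPochhammer ℝ (n + 1)).coeff (k + 1) := by
  have hS₁_coeff : ∀ m i, i ≤ m → (descPochhammer ℝ m).coeff i = S₁ m i := fun m i hi =>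
    coeff_eq_of_forall_eval_eq_sum (fun x => by rw [descPochhammer_eval_eq_prod_range, hS₁])
      (Nat.lt_succ_of_le hi)
  have hS₂_poly : (descPochhammer ℝ (n + 1)).scaleRoots a
      = ∑ i ∈ range (n + 2), C (S₂ (n + 1) i) * descPochhammer ℝ i :=
    Polynomial.funext fun x => by
      simp [descPochhammer_scaleRoots, eval_prod, eval_finsetSum,
        descPochhammer_eval_eq_prod_range, hS₂]
  have hcoeff := congrArg (coeff · (k + 1)) hS₂_poly
  simp only [coeff_scaleRoots, descPochhammer_natDegree, finsetSum_coeff, coeff_C_mul] at hcoeff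
  rw [Nat.add_sub_add_right] at hcoeff
  rw [mul_comm, hcoeff, sum_range_succ', descPochhammer_zero, coeff_one, if_neg (by omega),
    mul_zero, add_zero]
  calc ∑ m ∈ Icc k n, S₂ (n + 1) (m + 1) * S₁ (m + 1) (k + 1)
      = ∑ m ∈ Icc k n, S₂ (n + 1) (m + 1) * (descPochhammer ℝ (m + 1)).coeff (k + 1) :=
        sum_congr rfl fun m hm => by rw [hS₁_coeff _ _ (by grind)]
    _ = _ := by
        refine sum_subset (fun m hm => mem_range.2 (by grind)) fun m _ hmk => ?_
        rw [coeff_eq_zero_of_natDegree_lt (by grind [descPochhammer_natDegree]), mul_zero]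

theorem descPochhammer_succ_eq_X_mul_prod {R : Type*} [CommRing R] (n : ℕ) :
    descPochhammer R (n + 1) = X * ∏ i : Fin n, (X - C ((i : R) + 1)) := by
  induction n with
  | zero => simp
  | succ n ih =>
    rw [descPochhammer_succ_right, ih, Fin.prod_univ_castSucc, mul_assoc]
    simp

theorem coeff_descPochhammer_succ_succ {R : Type*} [CommRing R] {n k : ℕ} (hk : k ≤ n) :
    (descPochhammer R (n + 1)).coeff (k + 1)
      = (-1) ^ (n - k) *
          ∑ t ∈ (univ : Finset (Fin n)).powersetCard (n - k), ∏ i ∈ t, ((i : R) + 1) := by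
  rw [descPochhammer_succ_eq_X_mul_prod, coeff_X_mul]
  simp_rw [sub_eq_add_neg, ← C_neg]
  rw [prod_X_add_C_coeff _ _ (by simpa using hk), card_univ, Fintype.card_fin, mul_sum]
  refine sum_congr rfl fun t ht => ?_
  rw [prod_neg, (mem_powersetCard.1 ht).2]

section

variable {Ω ι : Type*} [MeasurableSpace Ω] {μ : Measure Ω} [Fintype ι] {X : ι → Ω → ℕ}

theorem integral_natCast_eq_measureReal_of_le_one {Y : Ω → ℕ} (hY : Measurable Y)
    (h : ∀ ω, Y ω ≤ 1) :
    ∫ ω, (Y ω : ℝ) ∂μ = μ.real {ω | Y ω = 1} := by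
  have hmeas : MeasurableSet {ω | Y ω = 1} := hY (measurableSet_singleton 1)
  rw [← integral_indicator_one hmeas]
  congr with ω
  have := h ω
  by_cases hω : Y ω = 1 <;> simp [Set.indicator, hω]
  omega

theorem ProbabilityTheory.iIndepFun.integral_prod_natCast (hX : ∀ i, Measurable (X i))
    (hindep : iIndepFun X μ) (t : Finset ι) :
    ∫ ω, ∏ i ∈ t, (X i ω : ℝ) ∂μ = ∏ i ∈ t, ∫ ω, (X i ω : ℝ) ∂μ := by
  classical
  have := hindep.isProbabilityMeasure
  have hprod := hindep.integral_fun_prod_comp (f := fun i (x : ℕ) => if i ∈ t then (x : ℝ) else 1)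
    (fun i => (hX i).aemeasurable) (fun i => measurable_from_nat.aestronglyMeasurable)
  calc ∫ ω, ∏ i ∈ t, (X i ω : ℝ) ∂μ
      = ∫ ω, ∏ i, (if i ∈ t then (X i ω : ℝ) else 1) ∂μ := by simp_rw [Fintype.prod_ite_mem]
    _ = ∏ i, (if i ∈ t then ∫ ω, (X i ω : ℝ) ∂μ else 1) := by
        rw [hprod]
        exact prod_congr rfl fun i _ => by split_ifs <;> simp
    _ = _ := Fintype.prod_ite_mem _ _

theorem integral_choose_sum_eq_sum_powersetCard_prod (hX : ∀ i, Measurable (X i))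
    (hindep : iIndepFun X μ) (hX_le : ∀ i ω, X i ω ≤ 1) (k : ℕ) :
    ∫ ω, ((∑ i, X i ω).choose k : ℝ) ∂μ
      = ∑ t ∈ univ.powersetCard k, ∏ i ∈ t, μ.real {ω | X i ω = 1} := by
  have := hindep.isProbabilityMeasure
  simp_rw [Nat.choose_sum_eq_sum_powersetCard_prod _ _ (fun i _ => hX_le i _), Nat.cast_sum,
    Nat.cast_prod]
  rw [integral_finsetSum _ fun t _ => ?_]
  · simp_rw [hindep.integral_prod_natCast hX,
      integral_natCast_eq_measureReal_of_le_one (hX _) (hX_le _)]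
  · refine Integrable.of_bound (by fun_prop) 1 (ae_of_all _ fun ω => ?_)
    rw [norm_prod]
    exact prod_le_one (fun _ _ => norm_nonneg _) fun i _ => by simpa using hX_le i ω

end

theorem sum_degenerate_stirling2_stirling1_eq_expectation_general
    {Ω : Type*} [MeasurableSpace Ω] (μ : Measure Ω)
    (l : ℝ)
    (n : ℕ) (X : ℕ → Ω → ℕ)
    (hmeas : ∀ j, Measurable (X j))
    (hindep : iIndepFun (fun i : Fin n => X (i.1 + 1)) μ)
    (hval : ∀ j ∈ Finset.Icc 1 n, ∀ ω, X j ω = 0 ∨ X j ω = 1)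
    (hp1 : ∀ j ∈ Finset.Icc 1 n, μ {ω | X j ω = 1} = ENNReal.ofReal (1 / (j : ℝ)))
    (S₁ : ℕ → ℕ → ℝ)
    (hS₁ : ∀ (m : ℕ) (x : ℝ),
      ∏ k ∈ Finset.range m, (x - k) = ∑ i ∈ Finset.range (m + 1), S₁ m i * x ^ i)
    (S₂ : ℕ → ℕ → ℝ)
    (hS₂ : ∀ (m : ℕ) (x : ℝ),
      ∏ k ∈ Finset.range m, (x - k * l)
        = ∑ i ∈ Finset.range (m + 1), S₂ m i * ∏ k ∈ Finset.range i, (x - k)) :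
    ∀ k : ℕ, k ≤ n →
      ∑ m ∈ Finset.Icc k n, S₂ (n + 1) (m + 1) * S₁ (m + 1) (k + 1)
        = (-1) ^ (n - k) * l ^ (n - k) * (Nat.factorial n : ℝ)
            * ∫ ω, ((∑ j ∈ Finset.Icc 1 n, X j ω).choose k : ℝ) ∂μ := by
  intro k hk
  have hmem : ∀ i : Fin n, i.1 + 1 ∈ Icc 1 n := fun i => mem_Icc.2 ⟨by omega, i.2⟩
  have hsum : ∀ ω, ∑ j ∈ Icc 1 n, X j ω = ∑ i : Fin n, X (i.1 + 1) ω := fun ω => by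
    rw [Fin.sum_univ_eq_sum_range (fun i => X (i + 1) ω), ← Ico_add_one_right_eq_Icc,
      sum_Ico_eq_sum_range, Nat.add_sub_cancel]
    simp_rw [add_comm 1]
  have hprob : ∀ i : Fin n, μ.real {ω | X (i.1 + 1) ω = 1} = ((i : ℝ) + 1)⁻¹ := fun i => by
    rw [measureReal_def, hp1 _ (hmem i), ENNReal.toReal_ofReal (by positivity)]
    push_cast
    rw [one_div]
  have hfact : ∏ i : Fin n, ((i : ℝ) + 1) = n.factorial := by
    rw [Fin.prod_univ_eq_prod_range (fun i => (i : ℝ) + 1), ← prod_range_add_one_eq_factorial]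
    push_cast
    rfl
  simp_rw [hsum]
  rw [sum_stirling2_mul_stirling1_eq_pow_mul_coeff_descPochhammer l S₁ hS₁ S₂ hS₂ n k,
    coeff_descPochhammer_succ_succ hk,
    integral_choose_sum_eq_sum_powersetCard_prod (fun i => hmeas _) hindep
      (fun i ω => by rcases hval _ (hmem i) ω with h | h <;> omega)]
  simp_rw [hprob]
  rw [← hfact, mul_assoc _ (∏ i : Fin n, ((i : ℝ) + 1)),
    prod_mul_sum_powersetCard_prod_inv _ _ (fun i _ => by positivity) (by simpa using hk),
    card_univ, Fintype.card_fin]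
  ring

/-- Theorem 3: Let `S₁` satisfy the defining identity of the Stirling numbers
of the first kind and `S₂ₗ` that of the degenerate Stirling numbers of the second kind.
Then for `Y = X 1 + ⋯ + X n` a sum of independent Bernoulli random variables with success
probabilities `1/j`, and `0 ≤ l ≤ n`,
`∑_{m=l}^{n} S₂ₗ(n+1, m+1) S₁(m+1, l+1) = (-1)^{n-l} λ^{n-l} n! E[C(Y,l)]`. -/
theorem sum_degenerate_stirling2_stirling1_eq_expectation
    {Ω : Type*} [MeasurableSpace Ω] (μ : Measure Ω) [IsProbabilityMeasure μ]
    (l : ℝ) (hl : l ≠ 0)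
    (n : ℕ) (hn : 0 < n) (X : ℕ → Ω → ℕ)
    (hmeas : ∀ j, Measurable (X j))
    (hindep : iIndepFun (fun i : Fin n => X (i.1 + 1)) μ)
    (hval : ∀ j ∈ Finset.Icc 1 n, ∀ ω, X j ω = 0 ∨ X j ω = 1)
    (hp1 : ∀ j ∈ Finset.Icc 1 n, μ {ω | X j ω = 1} = ENNReal.ofReal (1 / (j : ℝ)))
    (hp0 : ∀ j ∈ Finset.Icc 1 n, μ {ω | X j ω = 0} = ENNReal.ofReal (1 - 1 / (j : ℝ)))
    (S₁ : ℕ → ℕ → ℝ)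
    (hS₁ : ∀ (m : ℕ) (x : ℝ),
      ∏ k ∈ Finset.range m, (x - k) = ∑ i ∈ Finset.range (m + 1), S₁ m i * x ^ i)
    (S₂ : ℕ → ℕ → ℝ)
    (hS₂ : ∀ (m : ℕ) (x : ℝ),
      ∏ k ∈ Finset.range m, (x - k * l)
        = ∑ i ∈ Finset.range (m + 1), S₂ m i * ∏ k ∈ Finset.range i, (x - k)) :
    ∀ k : ℕ, k ≤ n →
      ∑ m ∈ Finset.Icc k n, S₂ (n + 1) (m + 1) * S₁ (m + 1) (k + 1)
        = (-1) ^ (n - k) * l ^ (n - k) * (Nat.factorial n : ℝ)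
            * ∫ ω, ((∑ j ∈ Finset.Icc 1 n, X j ω).choose k : ℝ) ∂μ :=
  sum_degenerate_stirling2_stirling1_eq_expectation_general μ l n X hmeas hindep hval hp1 S₁ hS₁ S₂
    hS₂
end

section
/- Let α > 0 and λ ∈ (0,1) be real numbers and let n be a positive integer. Let (X_j)_{1≤j≤n} be independent Bernoulli random variables with P{X_j = 1} = 1/j, and set Y_n = X_1 + ⋯ + X_n. Let (X_{j,λ}(α))_{1≤j≤n} be independent Bernoulli random variables with P{X_{j,λ}(α) = 1} = α/(α + λj), and set Z_{n,λ}(α) = X_{1,λ}(α) + ⋯ + X_{n,λ}(α). Then for every integer l with 0 ≤ l ≤ n, (α/λ)^l E[binom(Y_n, l)] = (Π_{j=1}^{n} (1 + α/(λj))) · (1/(2π)) ∫_{-π}^{π} E[e^{iθ(Z_{n,λ}(α) - l)}] dθ, where i = √(-1). -/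
open MeasureTheory ProbabilityTheory Finset Complex

/-!
For `0/1`-valued `X_j`, `C(Y, k)` is the number of `k`-subsets `S` with `X_j = 1` on `S`, i.e.
`∑_{|S| = k} ∏_{j ∈ S} X_j`, so by independence `E C(Y, k) = ∑_{|S| = k} ∏_{j ∈ S} 1/j`. Averaging
`e^{iθ(Z - k)}` over `θ ∈ [-π, π]` (Fubini and orthogonality of `e^{imθ}`) gives `P(Z = k)`, which
is `∑_{|S| = k} ∏_{j ∈ S} q_j ∏_{j ∉ S} (1 - q_j)` with `q_j = α/(α + λj)`. Multiplying by
`∏_j (1 + α/(λj))` turns each `q_j` into `(α/λ)(1/j)` and each `1 - q_j` into `1`.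
-/

section Combinatorics

variable {ι : Type*} [Fintype ι] [DecidableEq ι]

@[to_additive]
lemma Finset.prod_Icc_eq_prod_fin {M : Type*} [CommMonoid M] (n : ℕ) (f : ℕ → M) :
    ∏ j ∈ Icc 1 n, f j = ∏ i : Fin n, f (i + 1) := by
  rw [← Ico_add_one_right_eq_Icc, prod_Ico_eq_prod_range, ← Fin.prod_univ_eq_prod_range]
  simp [add_comm]

lemma Nat.choose_sum_eq_sum_powersetCard_prod_s11 {w : ι → ℕ} (hw : ∀ i, w i = 0 ∨ w i = 1)
    (k : ℕ) : (∑ i, w i).choose k = ∑ S ∈ powersetCard k univ, ∏ i ∈ S, w i := by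
  set T := univ.filter (fun i => w i = 1)
  have hsum : ∑ i, w i = #T := by
    rw [card_filter]; exact sum_congr rfl fun i _ => by rcases hw i with h | h <;> simp [h]
  have hterm (S : Finset ι) : ∏ i ∈ S, w i = if S ⊆ T then 1 else 0 := by
    calc ∏ i ∈ S, w i = ∏ i ∈ S, if i ∈ T then 1 else 0 :=
          prod_congr rfl fun i _ => by rcases hw i with h | h <;> simp [T, h]
      _ = if S ⊆ T then 1 else 0 := by simp only [prod_boole, subset_iff]; congr
  calc (∑ i, w i).choose k = #(powersetCard k T) := by rw [card_powersetCard, hsum]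
    _ = #((powersetCard k univ).filter (· ⊆ T)) := by
      congr 1; ext S; simp [mem_powersetCard, and_comm]
    _ = ∑ S ∈ powersetCard k univ, ∏ i ∈ S, w i := by
      rw [card_filter]; exact sum_congr rfl fun S _ => (hterm S).symm

lemma boole_sum_eq_sum_powersetCard_prod {R : Type*} [CommRing R] {w : ι → ℕ}
    (hw : ∀ i, w i = 0 ∨ w i = 1) (k : ℕ) :
    (if ∑ i, w i = k then 1 else 0 : R)
      = ∑ S ∈ powersetCard k univ, ∏ i, if i ∈ S then (w i : R) else 1 - w i := by
  set T := univ.filter (fun i => w i = 1)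
  have hsum : ∑ i, w i = #T := by
    rw [card_filter]; exact sum_congr rfl fun i _ => by rcases hw i with h | h <;> simp [h]
  have hterm (S : Finset ι) :
      (∏ i, if i ∈ S then (w i : R) else 1 - w i) = if S = T then 1 else 0 := by
    calc (∏ i, if i ∈ S then (w i : R) else 1 - w i)
        = ∏ i, if (i ∈ S ↔ i ∈ T) then 1 else 0 := prod_congr rfl fun i _ => by
          rcases hw i with h | h <;> by_cases hi : i ∈ S <;> simp [T, h, hi]
      _ = if S = T then 1 else 0 := by simp only [Fintype.prod_boole, ← Finset.ext_iff]
  simp_rw [hterm, sum_ite_eq', mem_powersetCard, hsum]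
  simp

lemma pow_mul_sum_powersetCard_prod_eq {R : Type*} [CommSemiring R] {c : R} {p q s r : ι → R}
    (hq : ∀ i, r i * q i = c * p i) (hs : ∀ i, r i * s i = 1) (k : ℕ) :
    c ^ k * ∑ S ∈ powersetCard k univ, ∏ i ∈ S, p i
      = (∏ i, r i) * ∑ S ∈ powersetCard k univ, ∏ i, if i ∈ S then q i else s i := by
  rw [mul_sum, mul_sum]
  refine sum_congr rfl fun S hS => ?_
  simp_rw [← prod_mul_distrib, mul_ite, hq, hs, Fintype.prod_ite_mem, prod_mul_distrib, prod_const,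
    (mem_powersetCard.mp hS).2]

end Combinatorics

section Probability

variable {ι Ω : Type*} [Fintype ι] [DecidableEq ι] [MeasurableSpace Ω] {μ : Measure Ω}

lemma integrable_finset_prod_of_norm_le_one [IsFiniteMeasure μ] {ι' : Type*} {f : ι' → Ω → ℝ}
    (hf : ∀ i, Measurable (f i)) (hf1 : ∀ i ω, ‖f i ω‖ ≤ 1) (s : Finset ι') :
    Integrable (fun ω => ∏ i ∈ s, f i ω) μ :=
  Integrable.of_bound (Finset.measurable_prod s fun i _ => hf i).aestronglyMeasurable 1 <|
    ae_of_all _ fun ω => by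
      rw [norm_prod]; exact prod_le_one (fun i _ => norm_nonneg _) fun i _ => hf1 i ω

lemma integral_natCast_eq_measureReal_of_zero_or_one [IsFiniteMeasure μ] {W : Ω → ℕ}
    (hW : Measurable W) (h01 : ∀ ω, W ω = 0 ∨ W ω = 1) :
    ∫ ω, (W ω : ℝ) ∂μ = μ.real {ω | W ω = 1} := by
  have hset : MeasurableSet {ω | W ω = 1} := hW (measurableSet_singleton 1)
  rw [← integral_indicator_one hset]
  congr 1 with ω
  rcases h01 ω with h | h <;> simp [h]

namespace ProbabilityTheory.iIndepFun

theorem integral_finset_prod_comp {𝕜 : Type*} [RCLike 𝕜] {β : ι → Type*}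
    [∀ i, MeasurableSpace (β i)] {X : ∀ i, Ω → β i} (hX : iIndepFun X μ)
    (mX : ∀ i, AEMeasurable (X i) μ) {f : ∀ i, β i → 𝕜}
    (hf : ∀ i, AEStronglyMeasurable (f i) (μ.map (X i))) (s : Finset ι) :
    ∫ ω, ∏ i ∈ s, f i (X i ω) ∂μ = ∏ i ∈ s, ∫ ω, f i (X i ω) ∂μ := by
  have := hX.isProbabilityMeasure
  have hf' : ∀ i, AEStronglyMeasurable (if i ∈ s then f i else 1) (μ.map (X i)) := fun i => by
    split_ifs
    · exact hf i
    · exact aestronglyMeasurable_const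
  convert hX.integral_fun_prod_comp mX hf' using 1
  · simp [ite_apply]
  · rw [← Fintype.prod_ite_mem]
    congr with i
    split_ifs <;> simp

variable [IsProbabilityMeasure μ] {W : ι → Ω → ℕ}

theorem integral_choose_sum (hW : iIndepFun W μ) (hmeas : ∀ i, Measurable (W i))
    (h01 : ∀ i ω, W i ω = 0 ∨ W i ω = 1) (k : ℕ) :
    ∫ ω, ((∑ i, W i ω).choose k : ℝ) ∂μ
      = ∑ S ∈ powersetCard k univ, ∏ i ∈ S, μ.real {ω | W i ω = 1} := by
  have hcast : ∀ i, Measurable fun ω => (W i ω : ℝ) := fun i => by fun_prop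
  have hcast1 : ∀ i ω, ‖(W i ω : ℝ)‖ ≤ 1 := fun i ω => by rcases h01 i ω with h | h <;> simp [h]
  simp_rw [Nat.choose_sum_eq_sum_powersetCard_prod_s11 (h01 · _), Nat.cast_sum, Nat.cast_prod]
  rw [integral_finsetSum _ fun S _ => integrable_finset_prod_of_norm_le_one hcast hcast1 S]
  refine sum_congr rfl fun S _ => ?_
  rw [hW.integral_finset_prod_comp (X := W) (f := fun _ m => (m : ℝ))
    (fun i => (hmeas i).aemeasurable) (fun i => by fun_prop)]
  exact prod_congr rfl fun i _ => integral_natCast_eq_measureReal_of_zero_or_one (hmeas i) (h01 i)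

theorem measureReal_sum_eq (hW : iIndepFun W μ) (hmeas : ∀ i, Measurable (W i))
    (h01 : ∀ i ω, W i ω = 0 ∨ W i ω = 1) (k : ℕ) :
    μ.real {ω | ∑ i, W i ω = k}
      = ∑ S ∈ powersetCard k univ,
          ∏ i, if i ∈ S then μ.real {ω | W i ω = 1} else 1 - μ.real {ω | W i ω = 1} := by
  have hsum : Measurable fun ω => ∑ i, W i ω := Finset.measurable_sum _ fun i _ => hmeas i
  have hfactor : ∀ (S : Finset ι) i,
      Measurable fun ω => if i ∈ S then (W i ω : ℝ) else 1 - W i ω :=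
    fun S i => by split_ifs <;> fun_prop
  have hfactor1 : ∀ (S : Finset ι) i ω, ‖if i ∈ S then (W i ω : ℝ) else 1 - W i ω‖ ≤ 1 :=
    fun S i ω => by rcases h01 i ω with h | h <;> split_ifs <;> simp [h]
  rw [← integral_indicator_one (show MeasurableSet {ω | ∑ i, W i ω = k} from
    hsum (measurableSet_singleton k))]
  simp_rw [Set.indicator_apply, Set.mem_ofPred_eq, Pi.one_apply,
    boole_sum_eq_sum_powersetCard_prod (h01 · _)]
  rw [integral_finsetSum _ fun S _ =>
    integrable_finset_prod_of_norm_le_one (hfactor S) (hfactor1 S) univ]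
  refine sum_congr rfl fun S _ => ?_
  rw [hW.integral_fun_prod_comp (X := W) (f := fun i m => if i ∈ S then (m : ℝ) else 1 - m)
    (fun i => (hmeas i).aemeasurable) (fun i => measurable_from_top.aestronglyMeasurable)]
  refine prod_congr rfl fun i _ => ?_
  have hi := integral_natCast_eq_measureReal_of_zero_or_one (μ := μ) (hmeas i) (h01 i)
  split_ifs
  · exact hi
  · have hint : Integrable (fun ω => (W i ω : ℝ)) μ := Integrable.of_bound (by fun_prop) 1 <|
      ae_of_all _ fun ω => by rcases h01 i ω with h | h <;> simp [h]
    rw [integral_sub (integrable_const 1) hint, hi]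
    simp

end ProbabilityTheory.iIndepFun

end Probability

lemma integral_exp_I_mul_intCast (m : ℤ) :
    ∫ θ in -Real.pi..Real.pi, cexp (I * θ * m) = if m = 0 then (2 * Real.pi : ℂ) else 0 := by
  split_ifs with hm
  · simp [hm]; ring
  have hc : I * m ≠ 0 := by simp [hm]
  rw [intervalIntegral.integral_congr (g := fun θ : ℝ => cexp (I * m * θ)) fun θ _ => by
    simp only [mul_right_comm I], integral_exp_mul_complex hc]
  have hperiod : cexp (I * m * Real.pi) = cexp (I * m * (-Real.pi : ℝ)) := by
    rw [show I * m * Real.pi = I * m * (-Real.pi : ℝ) + m * (2 * Real.pi * I) by push_cast; ring,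
      exp_add, exp_int_mul_two_pi_mul_I, mul_one]
  rw [hperiod, sub_self, zero_div]

lemma intervalIntegral_integral_exp_eq_measureReal {Ω : Type*} [MeasurableSpace Ω]
    (μ : Measure Ω) [IsFiniteMeasure μ] {Z : Ω → ℤ} (hZ : Measurable Z) (k : ℤ) :
    ∫ θ in -Real.pi..Real.pi, ∫ ω, cexp (I * θ * (Z ω - k)) ∂μ
      = 2 * Real.pi * μ.real {ω | Z ω = k} := by
  have hint : Integrable (Function.uncurry fun (θ : ℝ) ω => cexp (I * θ * (Z ω - k)))
      ((volume.restrict (Set.Ioc (-Real.pi) Real.pi)).prod μ) := by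
    refine Integrable.of_bound ?_ 1 (ae_of_all _ fun x => ?_)
    · exact (by fun_prop : Measurable _).aestronglyMeasurable
    · obtain ⟨θ, ω⟩ := x
      simp [norm_exp, mul_re]
  rw [intervalIntegral.integral_of_le (by linarith [Real.pi_pos]), integral_integral_swap hint]
  simp_rw [← intervalIntegral.integral_of_le (neg_le_self Real.pi_pos.le), ← Int.cast_sub,
    integral_exp_I_mul_intCast, sub_eq_zero]
  have hset : MeasurableSet {ω | Z ω = k} := hZ (measurableSet_singleton k)
  rw [mul_comm (2 * (Real.pi : ℂ)), ← real_smul, ← integral_indicator_const _ hset]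
  simp only [Set.indicator_apply, Set.mem_ofPred_eq]

lemma one_add_div_mul_div_add_eq {α l j : ℝ} (hα : 0 < α) (hl : 0 < l) (hj : 0 < j) :
    (1 + α / (l * j)) * (α / (α + l * j)) = α / l * (1 / j) := by
  have : 0 < α + l * j := by positivity
  field_simp
  ring

lemma one_add_div_mul_one_sub_div_add_eq {α l j : ℝ} (hα : 0 < α) (hl : 0 < l) (hj : 0 < j) :
    (1 + α / (l * j)) * (1 - α / (α + l * j)) = 1 := by
  have : 0 < α + l * j := by positivity
  field_simp
  ring

theorem expectation_choose_eq_integral_char_general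
    {Ω₁ : Type*} [MeasurableSpace Ω₁] (μ₁ : Measure Ω₁) [IsProbabilityMeasure μ₁]
    {Ω₂ : Type*} [MeasurableSpace Ω₂] (μ₂ : Measure Ω₂) [IsProbabilityMeasure μ₂]
    (α l : ℝ) (hα : 0 < α) (hl : l ∈ Set.Ioo (0 : ℝ) 1)
    (n : ℕ)
    (X : ℕ → Ω₁ → ℕ)
    (hXmeas : ∀ j, Measurable (X j))
    (hXindep : iIndepFun (fun i : Fin n => X (i.1 + 1)) μ₁)
    (hXval : ∀ j ∈ Finset.Icc 1 n, ∀ ω, X j ω = 0 ∨ X j ω = 1)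
    (hXp1 : ∀ j ∈ Finset.Icc 1 n, μ₁ {ω | X j ω = 1} = ENNReal.ofReal (1 / (j : ℝ)))
    (X' : ℕ → Ω₂ → ℕ)
    (hX'meas : ∀ j, Measurable (X' j))
    (hX'indep : iIndepFun (fun i : Fin n => X' (i.1 + 1)) μ₂)
    (hX'val : ∀ j ∈ Finset.Icc 1 n, ∀ ω, X' j ω = 0 ∨ X' j ω = 1)
    (hX'p1 : ∀ j ∈ Finset.Icc 1 n,
      μ₂ {ω | X' j ω = 1} = ENNReal.ofReal (α / (α + l * j))) :
    ∀ k : ℕ, k ≤ n →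
      ((((α / l) ^ k
            * ∫ ω, ((∑ j ∈ Finset.Icc 1 n, X j ω).choose k : ℝ) ∂μ₁ : ℝ)) : ℂ)
        = ((∏ j ∈ Finset.Icc 1 n, (1 + α / (l * j)) : ℝ) : ℂ)
            * ((1 / (2 * Real.pi) : ℂ)
                * ∫ θ in (-Real.pi)..Real.pi,
                    ∫ ω, Complex.exp
                      (Complex.I * θ
                        * (((∑ j ∈ Finset.Icc 1 n, X' j ω : ℕ) : ℂ) - k)) ∂μ₂) := by
  intro k _
  have hmem (i : Fin n) : i.1 + 1 ∈ Icc 1 n := mem_Icc.mpr ⟨by omega, i.isLt⟩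
  have hj (i : Fin n) : (0 : ℝ) < (i + 1 : ℕ) := by positivity
  have hl0 := hl.1
  have hp (i : Fin n) : μ₁.real {ω | X (i + 1) ω = 1} = 1 / (i + 1 : ℕ) := by
    rw [measureReal_def, hXp1 _ (hmem i), ENNReal.toReal_ofReal (one_div_pos.mpr (hj i)).le]
  have hq (i : Fin n) : μ₂.real {ω | X' (i + 1) ω = 1} = α / (α + l * (i + 1 : ℕ)) := by
    rw [measureReal_def, hX'p1 _ (hmem i), ENNReal.toReal_ofReal (by have := hj i; positivity)]
  have hY : ∫ ω, ((∑ j ∈ Icc 1 n, X j ω).choose k : ℝ) ∂μ₁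
      = ∑ S ∈ powersetCard k (univ : Finset (Fin n)), ∏ i ∈ S, 1 / ((i + 1 : ℕ) : ℝ) := by
    simp_rw [sum_Icc_eq_sum_fin, hXindep.integral_choose_sum (fun i => hXmeas _)
      (fun i => hXval _ (hmem i)), hp]
  have hZ : ∫ θ in -Real.pi..Real.pi,
        ∫ ω, cexp (I * θ * (((∑ j ∈ Icc 1 n, X' j ω : ℕ) : ℂ) - k)) ∂μ₂
      = 2 * Real.pi * ((∑ S ∈ powersetCard k (univ : Finset (Fin n)), ∏ i,
          if i ∈ S then α / (α + l * (i + 1 : ℕ)) else 1 - α / (α + l * (i + 1 : ℕ)) : ℝ) : ℂ) := by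
    have hsum : Measurable fun ω => ((∑ i : Fin n, X' (i + 1) ω : ℕ) : ℤ) :=
      measurable_from_top.comp (Finset.measurable_sum _ fun i _ => hX'meas _)
    have hfourier := intervalIntegral_integral_exp_eq_measureReal μ₂ hsum k
    simp only [Int.cast_natCast, Nat.cast_inj] at hfourier
    simp_rw [sum_Icc_eq_sum_fin, hfourier, hX'indep.measureReal_sum_eq (fun i => hX'meas _)
      (fun i => hX'val _ (hmem i)), hq]
  have h2pi : (2 * Real.pi : ℂ) ≠ 0 := mul_ne_zero two_ne_zero (ofReal_ne_zero.mpr Real.pi_ne_zero)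
  rw [hY, hZ, ← mul_assoc (1 / _), one_div_mul_cancel h2pi, one_mul, prod_Icc_eq_prod_fin,
    pow_mul_sum_powersetCard_prod_eq (fun i => one_add_div_mul_div_add_eq hα hl0 (hj i))
      (fun i => one_add_div_mul_one_sub_div_add_eq hα hl0 (hj i)), ofReal_mul]

/-- With `Y = X 1 + ⋯ + X n` a sum of independent Bernoulli random variables
with success probabilities `1/j`, and `Z = X' 1 + ⋯ + X' n` a sum of independent Bernoulli
random variables with success probabilities `α/(α + λj)`, for every `0 ≤ l ≤ n`,
`(α/λ)^l E[C(Y,l)] = (∏_{j=1}^n (1 + α/(λj))) (1/(2π)) ∫_{-π}^{π} E[e^{iθ(Z - l)}] dθ`. -/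
theorem expectation_choose_eq_integral_char
    {Ω₁ : Type*} [MeasurableSpace Ω₁] (μ₁ : Measure Ω₁) [IsProbabilityMeasure μ₁]
    {Ω₂ : Type*} [MeasurableSpace Ω₂] (μ₂ : Measure Ω₂) [IsProbabilityMeasure μ₂]
    (α l : ℝ) (hα : 0 < α) (hl : l ∈ Set.Ioo (0 : ℝ) 1)
    (n : ℕ) (hn : 0 < n)
    (X : ℕ → Ω₁ → ℕ)
    (hXmeas : ∀ j, Measurable (X j))
    (hXindep : iIndepFun (fun i : Fin n => X (i.1 + 1)) μ₁)
    (hXval : ∀ j ∈ Finset.Icc 1 n, ∀ ω, X j ω = 0 ∨ X j ω = 1)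
    (hXp1 : ∀ j ∈ Finset.Icc 1 n, μ₁ {ω | X j ω = 1} = ENNReal.ofReal (1 / (j : ℝ)))
    (hXp0 : ∀ j ∈ Finset.Icc 1 n, μ₁ {ω | X j ω = 0} = ENNReal.ofReal (1 - 1 / (j : ℝ)))
    (X' : ℕ → Ω₂ → ℕ)
    (hX'meas : ∀ j, Measurable (X' j))
    (hX'indep : iIndepFun (fun i : Fin n => X' (i.1 + 1)) μ₂)
    (hX'val : ∀ j ∈ Finset.Icc 1 n, ∀ ω, X' j ω = 0 ∨ X' j ω = 1)
    (hX'p1 : ∀ j ∈ Finset.Icc 1 n,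
      μ₂ {ω | X' j ω = 1} = ENNReal.ofReal (α / (α + l * j)))
    (hX'p0 : ∀ j ∈ Finset.Icc 1 n,
      μ₂ {ω | X' j ω = 0} = ENNReal.ofReal (1 - α / (α + l * j))) :
    ∀ k : ℕ, k ≤ n →
      ((((α / l) ^ k
            * ∫ ω, ((∑ j ∈ Finset.Icc 1 n, X j ω).choose k : ℝ) ∂μ₁ : ℝ)) : ℂ)
        = ((∏ j ∈ Finset.Icc 1 n, (1 + α / (l * j)) : ℝ) : ℂ)
            * ((1 / (2 * Real.pi) : ℂ)
                * ∫ θ in (-Real.pi)..Real.pi,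
                    ∫ ω, Complex.exp
                      (Complex.I * θ
                        * (((∑ j ∈ Finset.Icc 1 n, X' j ω : ℕ) : ℂ) - k)) ∂μ₂) :=
  expectation_choose_eq_integral_char_general μ₁ μ₂ α l hα hl n X hXmeas hXindep hXval hXp1 X'
    hX'meas hX'indep hX'val hX'p1
end
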